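/- If J and K are digital Jordan curves in the Khalimsky plane with K ⊆ J ∪ int(J), then int(K) ⊆ int(J). -/

import Mathlib

open Set

/-- The minimal open neighborhood of a point in a topological space. -/
def minOpenNhd {X : Type*} (t : TopologicalSpace X) (x : X) : Set X :=
  ⋂₀ {U : Set X | t.IsOpen U ∧ x ∈ U}

/-- The specialization-style preorder: `x ≤ y` iff `U_x ⊆ U_y`. -/
def specLE {X : Type*} (t : TopologicalSpace X) (x y : X) : Prop :=
  minOpenNhd t x ⊆ minOpenNhd t y

/-- Two points are adjacent if distinct and comparable in the specialization order. -/
def Adjacent {X : Type*} (t : TopologicalSpace X) (x y : X) : Prop :=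
  x ≠ y ∧ (specLE t x y ∨ specLE t y x)

/-- The adjacency set of a point. -/
def adjSet {X : Type*} (t : TopologicalSpace X) (x : X) : Set X := {y | Adjacent t x y}

/-- A COTS: a connected space in which every 3-point subset has a point separating
the other two. -/
def IsCOTS {X : Type*} (t : TopologicalSpace X) : Prop :=
  @ConnectedSpace X t ∧
    ∀ Y : Set X, Y.ncard = 3 →
      ∃ y ∈ Y, ∃ a ∈ Y \ {y}, ∃ b ∈ Y \ {y},
        @connectedComponentIn X t {y}ᶜ a ≠ @connectedComponentIn X t {y}ᶜ b

/-- An endpoint of a COTS: a point with at most one neighbor. -/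
def IsEndpoint {X : Type*} (t : TopologicalSpace X) (x : X) : Prop :=
  (adjSet t x).ncard ≤ 1

/-- A COTS-path: the continuous image of a finite COTS. -/
def IsCOTSPath {Y : Type*} (tY : TopologicalSpace Y) (P : Set Y) : Prop :=
  ∃ (C : Type) (tC : TopologicalSpace C), Finite C ∧ IsCOTS tC ∧
    ∃ f : C → Y, @Continuous C Y tC tY f ∧ Set.range f = P

/-- A COTS-path with prescribed start and end points. -/
def IsCOTSPathFromTo {Y : Type*} (tY : TopologicalSpace Y) (P : Set Y) (a b : Y) : Prop :=
  ∃ (C : Type) (tC : TopologicalSpace C), Finite C ∧ IsCOTS tC ∧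
    ∃ f : C → Y, @Continuous C Y tC tY f ∧ Set.range f = P ∧
      ∃ c₀ c₁ : C, IsEndpoint tC c₀ ∧ IsEndpoint tC c₁ ∧ f c₀ = a ∧ f c₁ = b

/-- A COTS-arc: the homeomorphic image of a finite COTS. -/
def IsCOTSArc {Y : Type*} (tY : TopologicalSpace Y) (A : Set Y) : Prop :=
  ∃ (C : Type) (tC : TopologicalSpace C), Finite C ∧ IsCOTS tC ∧
    ∃ f : C → Y, @Topology.IsEmbedding C Y tC tY f ∧ Set.range f = A

/-- A COTS-arc with prescribed endpoints. -/
def IsCOTSArcFromTo {Y : Type*} (tY : TopologicalSpace Y) (A : Set Y) (a b : Y) : Prop :=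
  ∃ (C : Type) (tC : TopologicalSpace C), Finite C ∧ IsCOTS tC ∧
    ∃ f : C → Y, @Topology.IsEmbedding C Y tC tY f ∧ Set.range f = A ∧
      ∃ c₀ c₁ : C, IsEndpoint tC c₀ ∧ IsEndpoint tC c₁ ∧ f c₀ = a ∧ f c₁ = b

/-- The COTS-distance: one less than the minimal cardinality of a COTS-arc
joining two points (`⊤` if there is no such arc). -/
noncomputable def cotsDist {X : Type*} (t : TopologicalSpace X) (x y : X) : ℕ∞ :=
  sInf {n : ℕ∞ | ∃ A : Set X, IsCOTSArcFromTo t A x y ∧ (A.ncard : ℕ∞) = n + 1}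

/-- The Khalimsky topology on ℤ. -/
def khal : TopologicalSpace ℤ :=
  TopologicalSpace.generateFrom
    {s : Set ℤ | ∃ n : ℤ, (Odd n ∧ s = {n}) ∨ (Even n ∧ s = {n - 1, n, n + 1})}

/-- The Khalimsky plane topology on ℤ × ℤ. -/
def khalPlane : TopologicalSpace (ℤ × ℤ) := @instTopologicalSpaceProd ℤ ℤ khal khal

/-- A point of the Khalimsky plane is pure if its coordinates have the same parity. -/
def IsPurePt (p : ℤ × ℤ) : Prop := (Even p.1 ∧ Even p.2) ∨ (Odd p.1 ∧ Odd p.2)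

/-- A digital Jordan curve: a finite set of at least 4 points such that removing
any point leaves a COTS-arc. -/
def IsJordanCurve {X : Type*} (t : TopologicalSpace X) (J : Set X) : Prop :=
  J.Finite ∧ 4 ≤ J.ncard ∧ ∀ j ∈ J, IsCOTSArc t (J \ {j})

/-- The interior of a digital Jordan curve in the Khalimsky plane: the union of the
finite (bounded) connected components of its complement. -/
def jInterior (J : Set (ℤ × ℤ)) : Set (ℤ × ℤ) :=
  ⋃₀ {S | ∃ p ∉ J, S = @connectedComponentIn _ khalPlane Jᶜ p ∧ S.Finite}

/-!
Every point `x` of a digital Jordan curve `J` is adjacent to a point of the exterior of `J`, i.e. to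
a point whose component in `Jᶜ` is infinite. For the topmost point of `J` the point right above it
will do, and the property spreads along the connected set `J`: a point `u ∈ J` has at most two
neighbours on `J`, so walking around the cycle of neighbours of `u`, starting at an exterior one,
one reaches a neighbour of any `v ∈ J` adjacent to `u` without crossing `J`.

If `K ⊆ J ∪ int(J)`, then no component of `Jᶜ` in the exterior of `J` meets `K`, so the exterior
of `J` lies in the exterior of `K`. A point of `int(K)` is thus outside the exterior of `J`, and it
is not on `J` either, since it would then share its component of `Kᶜ` with an adjacent exterior
point of `J`; so it lies in `int(J)`.
-/

open Topology

section Adjacency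

variable {X : Type*} [t : TopologicalSpace X]

lemma specLE_iff_specializes {x y : X} : specLE t x y ↔ x ⤳ y := by
  have h : ∀ z : X, minOpenNhd t z = nhdsKer {z} := fun z => by
    simp only [minOpenNhd, nhdsKer_def, singleton_subset_iff]; rfl
  rw [specLE, h, h, specializes_iff_nhdsKer_subset]

lemma adjacent_iff_specializes {x y : X} : Adjacent t x y ↔ x ≠ y ∧ (x ⤳ y ∨ y ⤳ x) := by
  simp only [Adjacent, specLE_iff_specializes]

lemma Adjacent.symm {x y : X} (h : Adjacent t x y) : Adjacent t y x :=
  ⟨h.1.symm, h.2.symm⟩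

lemma Specializes.isPreconnected_pair {x y : X} (h : x ⤳ y) : IsPreconnected {x, y} :=
  isPreconnected_singleton.subset_closure (singleton_subset_iff.2 (mem_insert x {y}))
    (insert_subset (subset_closure rfl) (singleton_subset_iff.2 (specializes_iff_mem_closure.1 h)))

lemma Adjacent.isPreconnected_pair {x y : X} (h : Adjacent t x y) : IsPreconnected {x, y} := by
  rcases (adjacent_iff_specializes.1 h).2 with hxy | hyx
  · exact hxy.isPreconnected_pair
  · exact pair_comm x y ▸ hyx.isPreconnected_pair

lemma connectedComponentIn_eq_of_adjacent {S : Set X} {x y : X} (hx : x ∈ S) (hy : y ∈ S)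
    (h : Adjacent t x y) : connectedComponentIn S x = connectedComponentIn S y :=
  connectedComponentIn_eq <| h.isPreconnected_pair.subset_connectedComponentIn (mem_insert x {y})
    (insert_subset hx (singleton_subset_iff.2 hy)) (mem_insert_of_mem x rfl)

lemma IsPreconnected.forall_of_adjacent [AlexandrovDiscrete X] {S : Set X} (hS : IsPreconnected S)
    {P : X → Prop} (hP : ∀ x ∈ S, ∀ y ∈ S, Adjacent t x y → P x → P y) {a : X} (ha : a ∈ S)
    (hPa : P a) : ∀ b ∈ S, P b := by
  have hP' : ∀ x ∈ S, ∀ y ∈ S, y ⤳ x → (P x ↔ P y) := fun x hx y hy hyx => by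
    rcases eq_or_ne x y with rfl | hne
    · rfl
    · have hadj : Adjacent t x y := adjacent_iff_specializes.2 ⟨hne, Or.inr hyx⟩
      exact ⟨hP x hx y hy hadj, hP y hy x hx hadj.symm⟩
  intro b hb
  refine (hS.induction₂ (fun x y => P x ↔ P y) (fun x hx => ?_) (fun _ _ _ _ _ _ => Iff.trans)
    (fun _ _ _ _ => Iff.symm) ha hb).1 hPa
  have hker : nhdsKer {x} ∈ 𝓝 x := nhdsKer_singleton_subset_iff_mem_nhds.1 subset_rfl
  filter_upwards [nhdsWithin_le_nhds hker, self_mem_nhdsWithin] with y hyx hy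
  exact hP' x hx y hy (mem_nhdsKer_singleton.1 hyx)

lemma IsPreconnected.exists_adjacent [AlexandrovDiscrete X] {S : Set X} (hS : IsPreconnected S)
    {a b : X} (ha : a ∈ S) (hb : b ∈ S) (hab : a ≠ b) : ∃ c ∈ S, Adjacent t a c := by
  by_contra! h
  exact hab (hS.forall_of_adjacent (P := (· = a))
    (fun x _ y hy hxy hx => absurd (hx ▸ hxy) (h y hy)) ha rfl b hb).symm

end Adjacency

section JordanCurve

variable {X : Type*} [t : TopologicalSpace X]

lemma IsCOTSArc.isConnected {A : Set X} (hA : IsCOTSArc t A) : IsConnected A := by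
  obtain ⟨C, tC, -, hC, f, hf, rfl⟩ := hA
  have := hC.1
  exact isConnected_range hf.continuous

lemma IsCOTSArc.false_of_joined {A Y : Set X} (hA : IsCOTSArc t A) (hYA : Y ⊆ A)
    (hY : Y.ncard = 3)
    (hjoin : ∀ x ∈ Y, ∀ y ∈ Y, ∃ S ⊆ A, IsPreconnected S ∧ x ∈ S ∧ y ∈ S ∧ S ∩ Y ⊆ {x, y}) :
    False := by
  obtain ⟨C, tC, -, hC, f, hf, rfl⟩ := hA
  have hY' : (f ⁻¹' Y).ncard = 3 := by
    rwa [← ncard_image_of_injective _ hf.injective, image_preimage_eq_of_subset hYA]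
  obtain ⟨c, hc, a, ha, b, hb, hab⟩ := hC.2 _ hY'
  obtain ⟨S, hSA, hS, haS, hbS, hSY⟩ := hjoin (f a) ha.1 (f b) hb.1
  have hT : IsPreconnected (f ⁻¹' S) := by
    rwa [← hf.isInducing.isPreconnected_image, image_preimage_eq_of_subset hSA]
  refine hab (connectedComponentIn_eq (hT.subset_connectedComponentIn haS ?_ hbS))
  rintro z hz rfl
  rcases hSY ⟨hz, hc⟩ with h | h
  · exact ha.2 (hf.injective h).symm
  · exact hb.2 (hf.injective h).symm

variable {J : Set X}

lemma IsJordanCurve.isPreconnected (hJ : IsJordanCurve t J) : IsPreconnected J := by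
  obtain ⟨a, b, c, ha, hb, hc, hab, hac, hbc⟩ :=
    (two_lt_ncard_iff hJ.1).1 (by linarith [hJ.2.1])
  have hJab : J = J \ {a} ∪ J \ {b} := by
    rw [← sdiff_inter, singleton_inter_eq_empty.2 (mt mem_singleton_iff.1 hab), sdiff_empty]
  rw [hJab]
  exact (hJ.2.2 a ha).isConnected.isPreconnected.union c ⟨hc, hac.symm⟩ ⟨hc, hbc.symm⟩
    (hJ.2.2 b hb).isConnected.isPreconnected

lemma IsJordanCurve.exists_mem_ne (hJ : IsJordanCurve t J) (a b c : X) :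
    ∃ z ∈ J, z ≠ a ∧ z ≠ b ∧ z ≠ c := by
  have h3 : ({a, b, c} : Set X).ncard < J.ncard := by
    have := (ncard_insert_le a {b, c}).trans (Nat.add_le_add_right (ncard_insert_le b {c}) 1)
    rw [ncard_singleton] at this
    linarith [hJ.2.1]
  obtain ⟨z, hzJ, hz⟩ := exists_mem_notMem_of_ncard_lt_ncard h3
  simp only [mem_insert_iff, mem_singleton_iff, not_or] at hz
  exact ⟨z, hzJ, hz⟩

lemma IsJordanCurve.not_triangle (hJ : IsJordanCurve t J) {a b c : X} (ha : a ∈ J) (hb : b ∈ J)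
    (hc : c ∈ J) (hab : Adjacent t a b) (hac : Adjacent t a c) (hbc : Adjacent t b c) : False := by
  obtain ⟨z, hzJ, hza, hzb, hzc⟩ := hJ.exists_mem_ne a b c
  have hpair : ∀ x ∈ ({a, b, c} : Set X), ∀ y ∈ ({a, b, c} : Set X), IsPreconnected {x, y} := by
    have h : ∀ x y : X, x = y ∨ Adjacent t x y ∨ Adjacent t y x → IsPreconnected {x, y} := by
      rintro x y (rfl | h | h)
      · simpa using isPreconnected_singleton
      · exact h.isPreconnected_pair
      · exact pair_comm y x ▸ h.isPreconnected_pair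
    rintro x (rfl | rfl | rfl) y (rfl | rfl | rfl) <;> apply h <;> tauto
  have hYA : {a, b, c} ⊆ J \ {z} := by
    rintro w (rfl | rfl | rfl) <;> exact ⟨by assumption, Ne.symm (by assumption)⟩
  exact (hJ.2.2 z hzJ).false_of_joined hYA (ncard_eq_three.2 ⟨a, b, c, hab.1, hac.1, hbc.1, rfl⟩)
    fun x hx y hy => ⟨{x, y}, insert_subset (hYA hx) (singleton_subset_iff.2 (hYA hy)),
      hpair x hx y hy, mem_insert x {y}, mem_insert_of_mem x rfl, inter_subset_left⟩

lemma IsJordanCurve.eq_or_eq_or_eq_of_adjacent [AlexandrovDiscrete X] (hJ : IsJordanCurve t J)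
    {u a b c : X} (hu : u ∈ J) (ha : a ∈ J) (hb : b ∈ J) (hc : c ∈ J) (hua : Adjacent t u a)
    (hub : Adjacent t u b) (huc : Adjacent t u c) : a = b ∨ a = c ∨ b = c := by
  by_contra! ⟨hab, hac, hbc⟩
  by_cases hz : ∃ z ∈ J, z ≠ u ∧ z ≠ a ∧ z ≠ b ∧ z ≠ c
  · obtain ⟨z, hzJ, hzu, hza, hzb, hzc⟩ := hz
    have hYA : {a, b, c} ⊆ J \ {z} := by
      rintro w (rfl | rfl | rfl) <;> exact ⟨by assumption, Ne.symm (by assumption)⟩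
    have hY : ∀ x ∈ ({a, b, c} : Set X), x ∈ J \ {z} ∧ Adjacent t u x := by
      rintro x (rfl | rfl | rfl) <;> exact ⟨hYA (by simp), by assumption⟩
    refine (hJ.2.2 z hzJ).false_of_joined hYA (ncard_eq_three.2 ⟨a, b, c, hab, hac, hbc, rfl⟩)
      fun x hx y hy => ⟨{u, x} ∪ {u, y}, ?_, ?_, by simp, by simp, ?_⟩
    · exact union_subset (insert_subset ⟨hu, hzu.symm⟩ (singleton_subset_iff.2 (hY x hx).1))
        (insert_subset ⟨hu, hzu.symm⟩ (singleton_subset_iff.2 (hY y hy).1))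
    · exact (hY x hx).2.isPreconnected_pair.union u (by simp) (by simp)
        (hY y hy).2.isPreconnected_pair
    · rintro w ⟨(rfl | rfl) | (rfl | rfl), hw⟩
      · exact ((hY _ hw).2.1 rfl).elim
      · simp
      · exact ((hY _ hw).2.1 rfl).elim
      · simp
  · push Not at hz
    obtain ⟨d, ⟨hdJ, hdu⟩, had⟩ := (hJ.2.2 u hu).isConnected.isPreconnected.exists_adjacent
      ⟨ha, hua.1.symm⟩ ⟨hb, hub.1.symm⟩ hab
    rcases eq_or_ne d b with rfl | hdb
    · exact hJ.not_triangle hu ha hdJ hua hub had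
    · obtain rfl := hz d hdJ hdu had.1.symm hdb
      exact hJ.not_triangle hu ha hdJ hua huc had

end JordanCurve

section CyclicWalk

variable {n : ℕ} {α : Type*} {P : ZMod n → Prop} {c : ZMod n → α}

lemma ZMod.add_natCast_eq_iff [NeZero n] {j a : ZMod n} {k : ℕ} (hk : k < n) :
    j + k = a ↔ k = (a - j).val := by
  rw [← eq_sub_iff_add_eq']
  constructor
  · rintro h
    rw [← h, ZMod.val_natCast_of_lt hk]
  · rintro rfl
    exact ZMod.natCast_zmod_val _

lemma apply_add_natCast_eq_of_chain (hc : ∀ i, P i → P (i + 1) → c (i + 1) = c i) (j : ZMod n) :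
    ∀ k : ℕ, (∀ m ≤ k, P (j + m)) → c (j + k) = c j
  | 0, _ => by simp
  | k + 1, h => by
    have hk := apply_add_natCast_eq_of_chain hc j k fun m hm => h m (hm.trans k.le_succ)
    have hstep := hc _ (h k k.le_succ) (by simpa [add_assoc] using h (k + 1) le_rfl)
    rwa [Nat.cast_succ, ← add_assoc, hstep]

lemma exists_pred_eq_of_chain [NeZero n] (hc : ∀ i, P i → P (i + 1) → c (i + 1) = c i)
    {a b j : ZMod n}    (hP : ∀ i, i ≠ a → i ≠ b → P i) (hja : j ≠ a) (hab : (a - j).val ≤ (b - j).val) :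
    ∃ s, s + 1 = a ∧ P s ∧ c s = c j := by
  have hA : (a - j).val ≠ 0 := by simpa [sub_eq_zero] using hja.symm
  have hB : (b - j).val < n := ZMod.val_lt _
  have hwalk : ∀ m ≤ (a - j).val - 1, P (j + m) := fun m hm =>
    hP _ (mt (ZMod.add_natCast_eq_iff (by omega)).1 (by omega))
      (mt (ZMod.add_natCast_eq_iff (by omega)).1 (by omega))
  refine ⟨j + ((a - j).val - 1 : ℕ), ?_, hwalk _ le_rfl,
    apply_add_natCast_eq_of_chain hc j _ hwalk⟩
  rw [add_assoc, ← Nat.cast_succ, Nat.succ_eq_add_one, Nat.sub_add_cancel (by omega),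
    ZMod.natCast_zmod_val, add_sub_cancel]

lemma exists_cyclic_neighbour_eq_of_chain [NeZero n]
    (hc : ∀ i, P i → P (i + 1) → c (i + 1) = c i) {a b j : ZMod n}    (hP : ∀ i, i ≠ a → i ≠ b → P i) (hja : j ≠ a) (hjb : j ≠ b) :
    ∃ s, (s + 1 = a ∨ s = a + 1) ∧ P s ∧ c s = c j := by
  rcases le_or_gt (a - j).val (b - j).val with hab | hba
  · obtain ⟨s, hs, hPs, hcs⟩ := exists_pred_eq_of_chain hc hP hja hab
    exact ⟨s, .inl hs, hPs, hcs⟩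
  -- walk downwards, i.e. upwards in the reflected cycle `i ↦ -i`
  have hc' : ∀ i, P (-i) → P (-(i + 1)) → c (-(i + 1)) = c (-i) := fun i h1 h2 => by
    simpa using (hc (-(i + 1)) h2 (by simpa using h1)).symm
  have hval : ∀ x : ZMod n, x ≠ j → (-x - -j).val = n - (x - j).val := fun x hx => by
    rw [show -x - -j = -(x - j) by ring, ZMod.neg_val, if_neg (sub_ne_zero.2 hx)]
  obtain ⟨s, hs, hPs, hcs⟩ := exists_pred_eq_of_chain (P := fun i => P (-i)) (c := fun i => c (-i))
    hc' (a := -a) (b := -b) (j := -j)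
    (fun i hia hib => hP _ (by simpa [neg_eq_iff_eq_neg] using hia)
      (by simpa [neg_eq_iff_eq_neg] using hib)) (by simpa using hja)
    (by rw [hval a hja.symm, hval b hjb.symm]; have := ZMod.val_lt (b - j); omega)
  exact ⟨-s, .inr (by rw [← neg_neg a, ← hs]; ring), hPs, by simpa using hcs⟩

end CyclicWalk

section Khalimsky

attribute [local instance 2000] khal khalPlane

lemma isOpen_khal_iff {U : Set ℤ} :
    IsOpen U ↔ ∀ m ∈ U, m % 2 = 0 → m - 1 ∈ U ∧ m + 1 ∈ U := by
  constructor
  · intro hU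
    change TopologicalSpace.GenerateOpen _ U at hU
    induction hU with
    | basic s hs =>
      obtain ⟨k, ⟨hk, rfl⟩ | ⟨hk, rfl⟩⟩ := hs
      · rw [Int.odd_iff] at hk
        simp only [mem_singleton_iff]
        omega
      · rw [Int.even_iff] at hk
        simp only [mem_insert_iff, mem_singleton_iff]
        omega
    | univ => simp
    | inter s u _ _ hs hu =>
      exact fun m hm h2 =>
        ⟨⟨(hs m hm.1 h2).1, (hu m hm.2 h2).1⟩, (hs m hm.1 h2).2, (hu m hm.2 h2).2⟩
    | sUnion _ _ ih =>
      rintro m ⟨s, hsS, hms⟩ h2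
      exact ⟨⟨s, hsS, (ih s hsS m hms h2).1⟩, ⟨s, hsS, (ih s hsS m hms h2).2⟩⟩
  · intro hU
    refine isOpen_iff_forall_mem_open.2 fun m hm => ?_
    rcases Int.emod_two_eq_zero_or_one m with h | h
    · refine ⟨{m - 1, m, m + 1}, ?_, .basic _ ⟨m, .inr ⟨Int.even_iff.2 h, rfl⟩⟩, by simp⟩
      rintro x (rfl | rfl | rfl)
      exacts [(hU _ hm h).1, hm, (hU _ hm h).2]
    · exact ⟨{m}, singleton_subset_iff.2 hm, .basic _ ⟨m, .inl ⟨Int.odd_iff.2 h, rfl⟩⟩, rfl⟩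

lemma specializes_khal_iff {x y : ℤ} : x ⤳ y ↔ x = y ∨ y % 2 = 0 ∧ (x = y - 1 ∨ x = y + 1) := by
  constructor
  · intro h
    refine specializes_iff_forall_open.1 h {z | z = y ∨ y % 2 = 0 ∧ (z = y - 1 ∨ z = y + 1)}
      (isOpen_khal_iff.2 fun m hm h2 => ?_) (.inl rfl)
    simp only [mem_ofPred_eq] at hm ⊢
    omega
  · refine fun h => specializes_iff_forall_open.2 fun s hs hy => ?_
    rcases h with rfl | ⟨h2, rfl | rfl⟩
    exacts [hy, (isOpen_khal_iff.1 hs y hy h2).1, (isOpen_khal_iff.1 hs y hy h2).2]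

instance alexandrovDiscrete_khal : @AlexandrovDiscrete ℤ khal :=
  ⟨fun _ hS => isOpen_khal_iff.2 fun m hm h2 =>
    ⟨mem_sInter.2 fun s hs => (isOpen_khal_iff.1 (hS s hs) m (hm s hs) h2).1,
      mem_sInter.2 fun s hs => (isOpen_khal_iff.1 (hS s hs) m (hm s hs) h2).2⟩⟩

instance alexandrovDiscrete_khalPlane : @AlexandrovDiscrete (ℤ × ℤ) khalPlane :=
  Prod.instAlexandrovDiscrete

def kingOffsets : Finset (ℤ × ℤ) := (({-1, 0, 1} : Finset ℤ) ×ˢ {-1, 0, 1}).erase 0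

lemma isPurePt_iff {p : ℤ × ℤ} : IsPurePt p ↔ (p.1 + p.2) % 2 = 0 := by
  simp only [IsPurePt, Int.even_iff, Int.odd_iff]
  omega

lemma adjacent_khalPlane_iff {p q : ℤ × ℤ} : Adjacent khalPlane p q ↔
    q - p ∈ kingOffsets ∧ ((q - p).1 = 0 ∨ (q - p).2 = 0 ∨ IsPurePt p) := by
  have hprod : ∀ x y : ℤ × ℤ, x ⤳ y ↔ x.1 ⤳ y.1 ∧ x.2 ⤳ y.2 := fun _ _ => specializes_prod
  simp only [adjacent_iff_specializes, hprod, specializes_khal_iff, kingOffsets, isPurePt_iff,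
    Finset.mem_erase, Finset.mem_product, Finset.mem_insert, Finset.mem_singleton, ne_eq,
    Prod.ext_iff, Prod.fst_sub, Prod.snd_sub, Prod.fst_zero, Prod.snd_zero]
  omega

lemma adjacent_add_zero_one (p : ℤ × ℤ) : Adjacent khalPlane p (p + (0, 1)) := by
  simp [adjacent_khalPlane_iff, kingOffsets]

/- The neighbours of a pure point are its eight king-move neighbours, those of a mixed point its
four rook-move neighbours; each offset list goes once around the point. -/
def offset8 : ZMod 8 → ℤ × ℤ :=
  ![(1, 0), (1, 1), (0, 1), (-1, 1), (-1, 0), (-1, -1), (0, -1), (1, -1)]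

def offset4 : ZMod 4 → ℤ × ℤ := ![(1, 0), (0, 1), (-1, 0), (0, -1)]

lemma injective_offset8 : Function.Injective offset8 := by decide

lemma injective_offset4 : Function.Injective offset4 := by decide

lemma image_offset8 : Finset.univ.image offset8 = kingOffsets := by decide

lemma image_offset4 :
    Finset.univ.image offset4 = kingOffsets.filter fun d => d.1 = 0 ∨ d.2 = 0 := by decide

lemma offset8_add_one_sub (i : ZMod 8) : offset8 (i + 1) - offset8 i ∈ kingOffsets ∧
    ((offset8 (i + 1) - offset8 i).1 = 0 ∨ (offset8 (i + 1) - offset8 i).2 = 0) := by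
  revert i; decide

lemma offset4_add_one_sub (i : ZMod 4) : offset4 (i + 1) - offset4 i ∈ kingOffsets := by
  revert i; decide

lemma adjacent_add_offset8 (u : ℤ × ℤ) (i : ZMod 8) :
    Adjacent khalPlane (u + offset8 i) (u + offset8 (i + 1)) := by
  rw [adjacent_khalPlane_iff, add_sub_add_left_eq_sub]
  exact ⟨(offset8_add_one_sub i).1, (offset8_add_one_sub i).2.imp_right .inl⟩

lemma adjacent_add_offset4 {u : ℤ × ℤ} (hu : ¬ IsPurePt u) (i : ZMod 4) :
    Adjacent khalPlane (u + offset4 i) (u + offset4 (i + 1)) := by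
  rw [adjacent_khalPlane_iff, add_sub_add_left_eq_sub]
  refine ⟨offset4_add_one_sub i, .inr (.inr ?_)⟩
  have hi : offset4 i ∈ Finset.univ.image offset4 := Finset.mem_image_of_mem _ (Finset.mem_univ i)
  simp only [image_offset4, kingOffsets, Finset.mem_filter, Finset.mem_erase, Finset.mem_product,
    Finset.mem_insert, Finset.mem_singleton, ne_eq, Prod.ext_iff, Prod.fst_zero,
    Prod.snd_zero] at hi
  rw [isPurePt_iff] at hu ⊢
  simp only [Prod.fst_add, Prod.snd_add]
  omega

lemma range_add_offset8 {u : ℤ × ℤ} (hu : IsPurePt u) :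
    range (fun i => u + offset8 i) = adjSet khalPlane u := by
  ext y
  have : y ∈ range (fun i => u + offset8 i) ↔ y - u ∈ Finset.univ.image offset8 := by
    simp [eq_sub_iff_add_eq']
  rw [this, image_offset8]
  simp [adjSet, adjacent_khalPlane_iff, hu]

lemma range_add_offset4 {u : ℤ × ℤ} (hu : ¬ IsPurePt u) :
    range (fun i => u + offset4 i) = adjSet khalPlane u := by
  ext y
  have : y ∈ range (fun i => u + offset4 i) ↔ y - u ∈ Finset.univ.image offset4 := by
    simp [eq_sub_iff_add_eq']
  rw [this, image_offset4]
  simp [adjSet, adjacent_khalPlane_iff, hu]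

def jExterior (J : Set (ℤ × ℤ)) : Set (ℤ × ℤ) := {x | (connectedComponentIn Jᶜ x).Infinite}

section Exterior

variable {J K : Set (ℤ × ℤ)}

lemma mem_jInterior {x : ℤ × ℤ} :
    x ∈ jInterior J ↔ x ∉ J ∧ (connectedComponentIn Jᶜ x).Finite := by
  constructor
  · rintro ⟨_, ⟨p, -, rfl, hfin⟩, hx⟩
    rw [connectedComponentIn_eq hx] at hfin
    exact ⟨connectedComponentIn_subset _ _ hx, hfin⟩
  · rintro ⟨hx, hfin⟩
    exact ⟨_, ⟨x, hx, rfl, hfin⟩, mem_connectedComponentIn hx⟩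

lemma notMem_of_mem_jExterior {x : ℤ × ℤ} (hx : x ∈ jExterior J) : x ∉ J := fun h =>
  hx (by rw [connectedComponentIn_eq_empty (notMem_compl_iff.2 h)]; exact finite_empty)

lemma jExterior_subset_jExterior (h : K ⊆ J ∪ jInterior J) : jExterior J ⊆ jExterior K := by
  intro e he
  have hsub : connectedComponentIn Jᶜ e ⊆ Kᶜ := fun k hk hkK => by
    have hk' : (connectedComponentIn Jᶜ k).Infinite := connectedComponentIn_eq hk ▸ he
    rcases h hkK with hkJ | hkI
    · exact connectedComponentIn_subset _ _ hk hkJ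
    · exact hk' (mem_jInterior.1 hkI).2
  exact he.mono (isPreconnected_connectedComponentIn.subset_connectedComponentIn
    (mem_connectedComponentIn (notMem_of_mem_jExterior he)) hsub)

lemma mem_jExterior_of_forall_snd_lt {e : ℤ × ℤ} (he : ∀ x ∈ J, x.2 < e.2) : e ∈ jExterior J := by
  have hray : ∀ k : ℕ, e + (0, (k : ℤ)) ∉ J := fun k hk => by
    have := he _ hk
    simp only [Prod.snd_add] at this
    omega
  have hmem : ∀ k : ℕ, e + (0, (k : ℤ)) ∈ connectedComponentIn Jᶜ e := by
    intro k
    induction k with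
    | zero =>
      rw [Nat.cast_zero, Prod.mk_zero_zero, add_zero]
      exact mem_connectedComponentIn fun h => lt_irrefl _ (he e h)
    | succ k ih =>
      have hadj : Adjacent khalPlane (e + (0, (k : ℤ))) (e + (0, ((k + 1 : ℕ) : ℤ))) := by
        convert adjacent_add_zero_one (e + (0, (k : ℤ))) using 1
        ext <;> simp [add_assoc]
      rw [connectedComponentIn_eq ih, connectedComponentIn_eq_of_adjacent (hray k) (hray _) hadj]
      exact mem_connectedComponentIn (hray _)
  refine infinite_of_injective_forall_mem (fun k l hkl => ?_) hmem
  simpa using hkl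

lemma IsJordanCurve.exists_adjacent_jExterior_of_ring (hJ : IsJordanCurve khalPlane J)
    {u v : ℤ × ℤ} (hu : u ∈ J) (hv : v ∈ J) (huv : Adjacent khalPlane u v) {n : ℕ} [NeZero n]
    {r : ZMod n → ℤ × ℤ} (hr : Function.Injective r)
    (hr_adj : ∀ i, Adjacent khalPlane (r i) (r (i + 1))) (hr_range : range r = adjSet khalPlane u)
    (hext : ∃ e ∈ jExterior J, Adjacent khalPlane u e) :
    ∃ e ∈ jExterior J, Adjacent khalPlane v e := by
  obtain ⟨e, he, hue⟩ := hext
  have hmem : ∀ {y}, Adjacent khalPlane u y → ∃ i, r i = y := fun h =>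
    (hr_range.symm ▸ h : _ ∈ range r)
  have hadj : ∀ i, Adjacent khalPlane u (r i) := fun i =>
    (hr_range ▸ mem_range_self i : r i ∈ adjSet khalPlane u)
  obtain ⟨a, rfl⟩ := hmem huv
  obtain ⟨j, rfl⟩ := hmem hue
  obtain ⟨b, hbJ, hb⟩ : ∃ b, r b ∈ J ∧ ∀ i, r i ∈ J → i = a ∨ i = b := by
    by_cases h : ∃ w, r w ∈ J ∧ w ≠ a
    · obtain ⟨w, hw, hwa⟩ := h
      refine ⟨w, hw, fun i hi => ?_⟩
      rcases hJ.eq_or_eq_or_eq_of_adjacent hu hv hw hi (hadj a) (hadj w) (hadj i) with h | h | h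
      · exact absurd (hr h).symm hwa
      · exact .inl (hr h).symm
      · exact .inr (hr h).symm
    · push Not at h
      exact ⟨a, hv, fun i hi => .inl (h i hi)⟩
  have hjJ := notMem_of_mem_jExterior he
  obtain ⟨s, hs, hsJ, hcs⟩ := exists_cyclic_neighbour_eq_of_chain (P := fun i => r i ∉ J)
    (c := fun i => connectedComponentIn Jᶜ (r i)) (a := a) (b := b) (j := j)
    (fun i h1 h2 => (connectedComponentIn_eq_of_adjacent h1 h2 (hr_adj i)).symm)
    (fun i hia hib hi => (hb i hi).elim hia hib) (fun h => hjJ (h ▸ hv)) (fun h => hjJ (h ▸ hbJ))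
  refine ⟨r s, show (connectedComponentIn Jᶜ (r s)).Infinite from hcs ▸ he, ?_⟩
  rcases hs with rfl | rfl
  exacts [(hr_adj s).symm, hr_adj a]

lemma IsJordanCurve.exists_adjacent_jExterior_of_adjacent (hJ : IsJordanCurve khalPlane J)
    {u v : ℤ × ℤ} (hu : u ∈ J) (hv : v ∈ J) (huv : Adjacent khalPlane u v)
    (hext : ∃ e ∈ jExterior J, Adjacent khalPlane u e) :
    ∃ e ∈ jExterior J, Adjacent khalPlane v e := by
  by_cases hpure : IsPurePt u
  · exact hJ.exists_adjacent_jExterior_of_ring hu hv huv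
      ((add_right_injective u).comp injective_offset8) (adjacent_add_offset8 u)
      (range_add_offset8 hpure) hext
  · exact hJ.exists_adjacent_jExterior_of_ring hu hv huv
      ((add_right_injective u).comp injective_offset4) (adjacent_add_offset4 hpure)
      (range_add_offset4 hpure) hext

lemma IsJordanCurve.exists_adjacent_jExterior (hJ : IsJordanCurve khalPlane J) {x : ℤ × ℤ}
    (hx : x ∈ J) : ∃ e ∈ jExterior J, Adjacent khalPlane x e := by
  obtain ⟨z, hz, hmax⟩ := exists_max_image J Prod.snd hJ.1 ⟨x, hx⟩
  have hztop : z + (0, 1) ∈ jExterior J := mem_jExterior_of_forall_snd_lt fun y hy => by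
    have := hmax y hy
    simp only [Prod.snd_add]
    omega
  exact hJ.isPreconnected.forall_of_adjacent
    (fun u hu v hv huv => hJ.exists_adjacent_jExterior_of_adjacent hu hv huv) hz
    ⟨_, hztop, adjacent_add_zero_one z⟩ x hx

end Exterior

theorem stmt17_general (J K : Set (ℤ × ℤ)) (hJ : IsJordanCurve khalPlane J)
    (h : K ⊆ J ∪ jInterior J) :
    jInterior K ⊆ jInterior J := by
  have hext := jExterior_subset_jExterior h
  intro x hx
  rw [mem_jInterior] at hx ⊢
  have hxJ : x ∉ J := fun hxJ => by
    obtain ⟨e, he, hxe⟩ := hJ.exists_adjacent_jExterior hxJ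
    have hcc := connectedComponentIn_eq_of_adjacent (S := Kᶜ) hx.1
      (notMem_of_mem_jExterior (hext he)) hxe
    exact hext he (hcc ▸ hx.2)
  exact ⟨hxJ, not_infinite.1 fun hinf => hext hinf hx.2⟩

/-- If a Jordan curve `K` lies inside `J ∪ int(J)`, then `int(K) ⊆ int(J)`. -/
theorem stmt17 (J K : Set (ℤ × ℤ)) (hJ : IsJordanCurve khalPlane J)
    (hK : IsJordanCurve khalPlane K) (h : K ⊆ J ∪ jInterior J) :
    jInterior K ⊆ jInterior J :=
  stmt17_general J K hJ h

end Khalimsky
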